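/- The divergence operator maps the face element space W²_p onto the full polynomial space P_p(ℝ³). -/

import Mathlib

open MeasureTheory

/-- Partial derivative of a scalar function on ℝ³. -/
noncomputable def pd3 (f : (Fin 3 → ℝ) → ℝ) (i : Fin 3) (x : Fin 3 → ℝ) : ℝ :=
  fderiv ℝ f x (Pi.single i 1)

/-- Curl of a vector field on ℝ³. -/
noncomputable def curl3 (u : (Fin 3 → ℝ) → (Fin 3 → ℝ)) (x : Fin 3 → ℝ) : Fin 3 → ℝ :=
  ![pd3 (fun y => u y 2) 1 x - pd3 (fun y => u y 1) 2 x,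
    pd3 (fun y => u y 0) 2 x - pd3 (fun y => u y 2) 0 x,
    pd3 (fun y => u y 1) 0 x - pd3 (fun y => u y 0) 1 x]

/-- Divergence of a vector field on ℝ³. -/
noncomputable def div3 (u : (Fin 3 → ℝ) → (Fin 3 → ℝ)) (x : Fin 3 → ℝ) : ℝ :=
  ∑ i, pd3 (fun y => u y i) i x

/-- Gradient of a scalar field on ℝ³. -/
noncomputable def grad3 (f : (Fin 3 → ℝ) → ℝ) (x : Fin 3 → ℝ) : Fin 3 → ℝ :=
  fun i => pd3 f i x

/-- Cross product in ℝ³. -/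
def cross3 (a b : Fin 3 → ℝ) : Fin 3 → ℝ :=
  ![a 1 * b 2 - a 2 * b 1, a 2 * b 0 - a 0 * b 2, a 0 * b 1 - a 1 * b 0]

/-- Euclidean dot product in ℝ³. -/
def dot3 (a b : Fin 3 → ℝ) : ℝ := ∑ i, a i * b i

/-- `f` is (given by) a polynomial of total degree ≤ p. -/
def IsPoly3 (p : ℕ) (f : (Fin 3 → ℝ) → ℝ) : Prop :=
  ∃ q : MvPolynomial (Fin 3) ℝ, q.totalDegree ≤ p ∧ ∀ x, f x = MvPolynomial.eval x q

/-- Vector field whose components are polynomials of total degree ≤ p. -/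
def IsPolyVec3 (p : ℕ) (u : (Fin 3 → ℝ) → (Fin 3 → ℝ)) : Prop :=
  ∀ i, IsPoly3 p (fun x => u x i)

/-- First-family Nédélec space of degree p (as a set of vector fields). -/
def NedelecW1 (p : ℕ) : Set ((Fin 3 → ℝ) → (Fin 3 → ℝ)) :=
  {v | ∃ P Q, IsPolyVec3 p P ∧ IsPolyVec3 p Q ∧ ∀ x, v x = P x + cross3 (Q x) x}

/-- Face-element (second family) space of degree p. -/
def NedelecW2 (p : ℕ) : Set ((Fin 3 → ℝ) → (Fin 3 → ℝ)) :=
  {v | ∃ P q, IsPolyVec3 p P ∧ IsPoly3 p q ∧ ∀ x, v x = P x + q x • x}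

/-- Poincaré lifting with center a. -/
noncomputable def Rlift (a : Fin 3 → ℝ) (u : (Fin 3 → ℝ) → (Fin 3 → ℝ))
    (x : Fin 3 → ℝ) : Fin 3 → ℝ :=
  cross3 (∫ t in (0:ℝ)..1, t • u (a + t • (x - a))) (x - a)

/-- Degree-2 Poincaré lifting with center a. -/
noncomputable def Dlift (a : Fin 3 → ℝ) (u : (Fin 3 → ℝ) → ℝ)
    (x : Fin 3 → ℝ) : Fin 3 → ℝ :=
  (∫ t in (0:ℝ)..1, t ^ 2 * u (a + t • (x - a))) • (x - a)

/-!
Write `v = P + q x` with polynomial components. Then `div P` has degree at most that of `P`,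
and `div (q x) = 3 q + x · ∇q` acts on the monomial `x^s` as multiplication by `|s| + 3`
(Euler's identity), so it preserves degrees and is invertible on `P_p(ℝ³)`: every
polynomial `r` of degree `≤ p` is already `div (q x)` for a `q` of degree `≤ p`.
-/

namespace MvPolynomial

variable {R σ : Type*} [CommSemiring R]

theorem totalDegree_pderiv_le (i : σ) (q : MvPolynomial σ R) :
    (pderiv i q).totalDegree ≤ q.totalDegree := by
  refine Finset.sup_le fun m hm => ?_
  rw [mem_support_iff, coeff_pderiv] at hm
  refine le_trans ?_ (le_totalDegree (mem_support_iff.mpr (left_ne_zero_of_mul hm)))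
  simp [Finsupp.sum_add_index']

theorem totalDegree_le_of_coeff_eq_mul {q r : MvPolynomial σ R} (c : (σ →₀ ℕ) → R)
    (h : ∀ s, coeff s q = c s * coeff s r) : q.totalDegree ≤ r.totalDegree :=
  totalDegree_le_of_support_subset fun s hs => by
    rw [mem_support_iff, h] at hs
    rw [mem_support_iff]
    exact right_ne_zero_of_mul hs

variable [Fintype σ]

theorem totalDegree_sum_pderiv_le {n : ℕ} (P : σ → MvPolynomial σ R)
    (hP : ∀ i, (P i).totalDegree ≤ n) : (∑ i, pderiv i (P i)).totalDegree ≤ n :=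
  (totalDegree_finsetSum _ _).trans
    (Finset.sup_le fun i _ => (totalDegree_pderiv_le i (P i)).trans (hP i))

theorem coeff_sum_pderiv_mul_X (q : MvPolynomial σ R) (s : σ →₀ ℕ) :
    coeff s (∑ i, pderiv i (q * X i)) = (s.degree + Fintype.card σ) * coeff s q := by
  simp only [coeff_sum, coeff_pderiv, coeff_mul_X, ← Finset.mul_sum, Finset.sum_add_distrib,
    Finset.sum_const, Finset.card_univ, Finsupp.degree_eq_sum]
  push_cast
  ring

theorem totalDegree_sum_pderiv_mul_X_le (q : MvPolynomial σ R) :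
    (∑ i, pderiv i (q * X i)).totalDegree ≤ q.totalDegree :=
  totalDegree_le_of_coeff_eq_mul _ (coeff_sum_pderiv_mul_X q)

theorem exists_sum_pderiv_mul_X_eq {K : Type*} [Field K] [CharZero K] [Nonempty σ]
    (r : MvPolynomial σ K) :
    ∃ q : MvPolynomial σ K, q.totalDegree ≤ r.totalDegree ∧ ∑ i, pderiv i (q * X i) = r := by
  have hc (s : σ →₀ ℕ) : (s.degree + Fintype.card σ : K) ≠ 0 := by
    exact_mod_cast (Nat.add_pos_right s.degree (Fintype.card_pos (α := σ))).ne'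
  set q := ∑ s ∈ r.support, monomial s ((s.degree + Fintype.card σ : K)⁻¹ * coeff s r)
  have hq (s) : coeff s q = (s.degree + Fintype.card σ : K)⁻¹ * coeff s r := by
    classical
    simp only [q, coeff_sum, coeff_monomial, Finset.sum_ite_eq', mem_support_iff]
    split_ifs with h <;> simp_all
  refine ⟨q, totalDegree_le_of_coeff_eq_mul _ hq, ext _ _ fun s => ?_⟩
  rw [coeff_sum_pderiv_mul_X, hq, ← mul_assoc, mul_inv_cancel₀ (hc s), one_mul]

theorem hasFDerivAt_eval {𝕜 : Type*} [NontriviallyNormedField 𝕜] (q : MvPolynomial σ 𝕜)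
    (x : σ → 𝕜) :
    HasFDerivAt (fun y => eval y q)
      (∑ i, eval x (pderiv i q) • (ContinuousLinearMap.proj i : (σ → 𝕜) →L[𝕜] 𝕜)) x := by
  induction q using MvPolynomial.induction_on with
  | C a =>
    simp only [eval_C]
    exact (hasFDerivAt_const a x).congr_fderiv (by ext; simp)
  | add r s hr hs =>
    simp only [eval_add]
    exact (hr.add hs).congr_fderiv (by ext; simp [add_mul, Finset.sum_add_distrib])
  | mul_X r i hr =>
    simp only [eval_mul, eval_X]
    refine (hr.mul (hasFDerivAt_apply i x)).congr_fderiv (ContinuousLinearMap.ext fun v => ?_)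
    classical
    simp [pderiv_X, Pi.single_apply, apply_ite (eval x), Finset.sum_add_distrib, add_mul,
      Finset.mul_sum, mul_assoc]

end MvPolynomial

open MvPolynomial

theorem pd3_eval (q : MvPolynomial (Fin 3) ℝ) (i : Fin 3) (x : Fin 3 → ℝ) :
    pd3 (fun y => eval y q) i x = eval x (pderiv i q) := by
  simp [pd3, (hasFDerivAt_eval q x).fderiv, Pi.single_apply]

theorem div3_eval (Q : Fin 3 → MvPolynomial (Fin 3) ℝ) (x : Fin 3 → ℝ) :
    div3 (fun y i => eval y (Q i)) x = eval x (∑ i, pderiv i (Q i)) := by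
  simp [div3, pd3_eval]

theorem isPoly3_div3_of_mem_nedelecW2 {p : ℕ} {v : (Fin 3 → ℝ) → (Fin 3 → ℝ)}
    (hv : v ∈ NedelecW2 p) : IsPoly3 p (div3 v) := by
  obtain ⟨P, q, hP, ⟨Q, hQ, hqQ⟩, hPq⟩ := hv
  choose P' hP' hPP' using hP
  have hv' : v = fun y i => eval y (P' i + Q * X i) := by
    funext y i
    simp [hPq, hPP', hqQ, mul_comm]
  refine ⟨∑ i, pderiv i (P' i) + ∑ i, pderiv i (Q * X i), ?_, fun x => ?_⟩
  · exact (totalDegree_add _ _).trans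
      (max_le (totalDegree_sum_pderiv_le P' hP') ((totalDegree_sum_pderiv_mul_X_le Q).trans hQ))
  · rw [hv', div3_eval, ← Finset.sum_add_distrib]
    simp only [map_add]

theorem exists_mem_nedelecW2_div3_eq {p : ℕ} {f : (Fin 3 → ℝ) → ℝ} (hf : IsPoly3 p f) :
    ∃ v ∈ NedelecW2 p, div3 v = f := by
  obtain ⟨r, hr, hfr⟩ := hf
  obtain ⟨q, hq, rfl⟩ := exists_sum_pderiv_mul_X_eq r
  refine ⟨fun x => eval x q • x, ⟨0, fun x => eval x q, fun i => ⟨0, by simp, by simp⟩,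
    ⟨q, hq.trans hr, fun _ => rfl⟩, by simp⟩, funext fun x => ?_⟩
  rw [hfr, ← div3_eval]
  congr
  funext y i
  simp [mul_comm]

/-- `div(W²_p) = P_p(ℝ³)`. -/
theorem div_W2_eq_poly (p : ℕ) :
    {f | ∃ v ∈ NedelecW2 p, ∀ x, f x = div3 v x} = {f | IsPoly3 p f} := by
  ext f
  constructor
  · rintro ⟨v, hv, hf⟩
    rw [funext hf]
    exact isPoly3_div3_of_mem_nedelecW2 hv
  · intro hf
    obtain ⟨v, hv, rfl⟩ := exists_mem_nedelecW2_div3_eq hf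
    exact ⟨v, hv, fun _ => rfl⟩
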